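/- arXiv:1707.03119 — 2 statements merged into one kernel-verified Lean document; each statement's English description precedes it below -/
import Mathlib

section
/- For the three-parameter Weibull density f(t | β, η, μ) = (β/η)((t−μ)/η)^{β−1} exp(−((t−μ)/η)^β) on t > μ, and the improper prior π(β, η, μ) = η^{−1}β^{−b} with b ≥ 0, a single exact (uncensored) observation l₁ > 0 yields an improper posterior: the integral ∫₀^{l₁} ∫₀^∞ ∫₀^∞ η^{−1}β^{−b} · (β/η)((l₁−μ)/η)^{β−1} exp(−((l₁−μ)/η)^β) dβ dη dμ diverges to infinity. -/
open MeasureTheory Real Set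
open scoped ENNReal

lemma aux_rpow_lintegral_top (b : ℝ) :
    ∫⁻ x in Set.Ioi (0:ℝ), ENNReal.ofReal (x ^ (-b)) = ⊤ := by
  have hm : Measurable fun x : ℝ => x ^ (-b) := by measurability
  rcases le_total b 1 with hb | hb
  · have h1 : ∫⁻ x in Set.Ioi (1:ℝ), ENNReal.ofReal (x ^ (-b)) = ⊤ := by
      by_contra h
      have hint : IntegrableOn (fun x : ℝ => x ^ (-b)) (Set.Ioi 1) :=
        (lintegral_ofReal_ne_top_iff_integrable hm.aestronglyMeasurable
          (ae_restrict_of_forall_mem measurableSet_Ioi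
            (fun x hx => Real.rpow_nonneg (le_of_lt (lt_trans one_pos hx)) _))).mp h
      rw [integrableOn_Ioi_rpow_iff zero_lt_one] at hint
      linarith
    rw [eq_top_iff, ← h1]
    exact lintegral_mono_set (Set.Ioi_subset_Ioi zero_le_one)
  · have h1 : ∫⁻ x in Set.Ioo (0:ℝ) 1, ENNReal.ofReal (x ^ (-b)) = ⊤ := by
      by_contra h
      have hint : IntegrableOn (fun x : ℝ => x ^ (-b)) (Set.Ioo 0 1) :=
        (lintegral_ofReal_ne_top_iff_integrable hm.aestronglyMeasurable
          (ae_restrict_of_forall_mem measurableSet_Ioo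
            (fun x hx => Real.rpow_nonneg (le_of_lt hx.1) _))).mp h
      rw [intervalIntegral.integrableOn_Ioo_rpow_iff zero_lt_one] at hint
      linarith
    rw [eq_top_iff, ← h1]
    exact lintegral_mono_set Set.Ioo_subset_Ioi_self

lemma aux_eta_integral {s β : ℝ} (hs : 0 < s) (hβ : 0 < β) :
    ∫⁻ η in Set.Ioi s, ENNReal.ofReal (η ^ (-β - 1)) = ENNReal.ofReal (s ^ (-β) / β) := by
  rw [← ofReal_integral_eq_lintegral_ofReal
      (integrableOn_Ioi_rpow_of_lt (by linarith) hs)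
      (ae_restrict_of_forall_mem measurableSet_Ioi
        (fun x hx => Real.rpow_nonneg (le_of_lt (hs.trans hx)) _))]
  rw [integral_Ioi_rpow_of_lt (by linarith) hs]
  congr 1
  rw [show -β - 1 + 1 = -β by ring, neg_div_neg_eq]

/-- With a single exact Weibull observation `l₁ > 0` and improper prior
`π(β,η,μ) = η⁻¹ β^{-b}` (`b ≥ 0`), the posterior normalizing integral diverges. -/
theorem weibull_posterior_improper_single_obs (b l₁ : ℝ) (hb : 0 ≤ b) (hl : 0 < l₁) :
    ∫⁻ μ in Set.Ioo (0:ℝ) l₁, ∫⁻ η in Set.Ioi (0:ℝ), ∫⁻ β in Set.Ioi (0:ℝ),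
      ENNReal.ofReal (η⁻¹ * β ^ (-b) *
        ((β / η) * (((l₁ - μ) / η) ^ (β - 1)) *
          Real.exp (-(((l₁ - μ) / η) ^ β)))) = ⊤ := by
  have key : ∀ μ ∈ Set.Ioo (0:ℝ) l₁,
      ∫⁻ η in Set.Ioi (0:ℝ), ∫⁻ β in Set.Ioi (0:ℝ),
        ENNReal.ofReal (η⁻¹ * β ^ (-b) *
          ((β / η) * (((l₁ - μ) / η) ^ (β - 1)) *
            Real.exp (-(((l₁ - μ) / η) ^ β)))) = ⊤ := by
    intro μ hμ
    have hs : 0 < l₁ - μ := sub_pos.mpr hμ.2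
    set s : ℝ := l₁ - μ with hsdef
    set F : ℝ → ℝ → ℝ≥0∞ := fun η β => ENNReal.ofReal (η⁻¹ * β ^ (-b) *
      ((β / η) * ((s / η) ^ (β - 1)) * Real.exp (-((s / η) ^ β)))) with hF
    show ∫⁻ η in Set.Ioi (0:ℝ), ∫⁻ β in Set.Ioi (0:ℝ), F η β = ⊤
    have hFm : Measurable (Function.uncurry F) := by
      have huc : Function.uncurry F = fun p : ℝ × ℝ => ENNReal.ofReal (p.1⁻¹ * p.2 ^ (-b) *
          ((p.2 / p.1) * ((s / p.1) ^ (p.2 - 1)) * Real.exp (-((s / p.1) ^ p.2)))) := rfl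
      rw [huc]
      exact Measurable.ennreal_ofReal
        ((measurable_fst.inv.mul (measurable_snd.pow measurable_const)).mul
          (((measurable_snd.div measurable_fst).mul
            ((measurable_const.div measurable_fst).pow (measurable_snd.sub measurable_const))).mul
            (((measurable_const.div measurable_fst).pow measurable_snd).neg.exp)))
    have hswap : ∫⁻ η in Set.Ioi s, ∫⁻ β in Set.Ioi (0:ℝ), F η β
        = ∫⁻ β in Set.Ioi (0:ℝ), ∫⁻ η in Set.Ioi s, F η β :=
      lintegral_lintegral_swap hFm.aemeasurable
    have hbound : ∀ β ∈ Set.Ioi (0:ℝ),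
        ENNReal.ofReal (Real.exp (-1) * s⁻¹ * β ^ (-b)) ≤ ∫⁻ η in Set.Ioi s, F η β := by
      intro β hβ
      have hβ0 : (0:ℝ) < β := hβ
      have hC : (0:ℝ) ≤ β ^ (-b) * β * s ^ (β - 1) * Real.exp (-1) := by positivity
      have step1 : ∫⁻ η in Set.Ioi s,
          ENNReal.ofReal ((β ^ (-b) * β * s ^ (β - 1) * Real.exp (-1)) * η ^ (-β - 1))
            ≤ ∫⁻ η in Set.Ioi s, F η β := by
        apply setLIntegral_mono' measurableSet_Ioi
        intro η hη
        have hη0 : (0:ℝ) < η := hs.trans hη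
        apply ENNReal.ofReal_le_ofReal
        have hrw : η⁻¹ * β ^ (-b) * ((β / η) * ((s / η) ^ (β - 1)) * Real.exp (-((s / η) ^ β)))
            = (β ^ (-b) * β * s ^ (β - 1) * η ^ (-β - 1)) * Real.exp (-((s / η) ^ β)) := by
          have h1 : (s / η) ^ (β - 1) = s ^ (β - 1) / η ^ (β - 1) :=
            Real.div_rpow hs.le hη0.le (β - 1)
          have h2 : η ^ (-β - 1) = (η ^ (β - 1))⁻¹ * η⁻¹ * η⁻¹ := by
            rw [← Real.rpow_neg_one η, ← Real.rpow_neg hη0.le,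
              ← Real.rpow_add hη0, ← Real.rpow_add hη0]
            ring_nf
          rw [h1, h2]
          field_simp
        rw [hrw]
        have hA : (0:ℝ) ≤ β ^ (-b) * β * s ^ (β - 1) * η ^ (-β - 1) := by positivity
        have hexp : Real.exp (-1) ≤ Real.exp (-((s / η) ^ β)) := by
          apply Real.exp_le_exp.mpr
          have h1 : (s / η) ^ β ≤ 1 :=
            Real.rpow_le_one (by positivity) (by rw [div_le_one hη0]; exact hη.le) hβ0.le
          linarith
        calc β ^ (-b) * β * s ^ (β - 1) * Real.exp (-1) * η ^ (-β - 1)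
            = (β ^ (-b) * β * s ^ (β - 1) * η ^ (-β - 1)) * Real.exp (-1) := by ring
          _ ≤ (β ^ (-b) * β * s ^ (β - 1) * η ^ (-β - 1)) * Real.exp (-((s / η) ^ β)) :=
              mul_le_mul_of_nonneg_left hexp hA
      refine le_trans (le_of_eq ?_) step1
      have hsplit : ∀ η : ℝ,
          ENNReal.ofReal ((β ^ (-b) * β * s ^ (β - 1) * Real.exp (-1)) * η ^ (-β - 1))
          = ENNReal.ofReal (β ^ (-b) * β * s ^ (β - 1) * Real.exp (-1))
              * ENNReal.ofReal (η ^ (-β - 1)) :=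
        fun η => ENNReal.ofReal_mul hC
      simp_rw [hsplit]
      rw [lintegral_const_mul'' _
        ((measurable_id'.pow (measurable_const : Measurable fun _ : ℝ => -β - 1)).ennreal_ofReal.aemeasurable)]
      rw [aux_eta_integral hs hβ0, ← ENNReal.ofReal_mul hC]
      congr 1
      have hsss : s ^ (β - 1) * s ^ (-β) = s⁻¹ := by
        rw [← Real.rpow_add hs, show β - 1 + -β = -1 by ring, Real.rpow_neg_one]
      calc Real.exp (-1) * s⁻¹ * β ^ (-b)
          = (s ^ (β - 1) * s ^ (-β)) * (β * β⁻¹) * (Real.exp (-1) * β ^ (-b)) := by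
            rw [hsss, mul_inv_cancel₀ hβ0.ne']; ring
        _ = β ^ (-b) * β * s ^ (β - 1) * Real.exp (-1) * (s ^ (-β) / β) := by
            rw [div_eq_mul_inv]; ring
    rw [eq_top_iff]
    have hc0 : ENNReal.ofReal (Real.exp (-1) * s⁻¹) ≠ 0 := by
      simp only [ne_eq, ENNReal.ofReal_eq_zero, not_le]
      positivity
    calc (⊤ : ℝ≥0∞)
        = ENNReal.ofReal (Real.exp (-1) * s⁻¹)
            * ∫⁻ β in Set.Ioi (0:ℝ), ENNReal.ofReal (β ^ (-b)) := by
          rw [aux_rpow_lintegral_top b, ENNReal.mul_top hc0]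
      _ = ∫⁻ β in Set.Ioi (0:ℝ), ENNReal.ofReal (Real.exp (-1) * s⁻¹)
            * ENNReal.ofReal (β ^ (-b)) :=
          (lintegral_const_mul'' _
            ((measurable_id'.pow (measurable_const : Measurable fun _ : ℝ => -b)).ennreal_ofReal.aemeasurable)).symm
      _ = ∫⁻ β in Set.Ioi (0:ℝ), ENNReal.ofReal (Real.exp (-1) * s⁻¹ * β ^ (-b)) := by
          refine lintegral_congr fun β => ?_
          exact (ENNReal.ofReal_mul (by positivity)).symm
      _ ≤ ∫⁻ β in Set.Ioi (0:ℝ), ∫⁻ η in Set.Ioi s, F η β :=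
          setLIntegral_mono' measurableSet_Ioi hbound
      _ = ∫⁻ η in Set.Ioi s, ∫⁻ β in Set.Ioi (0:ℝ), F η β := hswap.symm
      _ ≤ ∫⁻ η in Set.Ioi (0:ℝ), ∫⁻ β in Set.Ioi (0:ℝ), F η β :=
          lintegral_mono_set (Set.Ioi_subset_Ioi hs.le)
  rw [setLIntegral_congr_fun measurableSet_Ioo key, setLIntegral_const]
  rw [Real.volume_Ioo, ENNReal.top_mul]
  simp [hl.ne', hl]
end

section
/- Let n ≥ 1, n_f ≥ 1, b ≥ 0 with n_f − b > 0, and let m₁, …, m_n be fixed positive reals with n_f ≤ n. Then the integral ∫₀^∞ β^{n_f − b − 1} (∏_{i=1}^{n_f} m_i^{β−1}) / (∑_{i=1}^n m_i^β)^{n_f} dβ is finite, provided the m_i are not all equal in such a way that (∏_{i=1}^{n_f} m_i^β)/(∑_{i=1}^{n_f} m_i^β)^{n_f} fails to decay; specifically, finiteness holds whenever (∏_{i=1}^{n_f} m_i)^{1/n_f} < max(m₁,…,m_{n_f}), i.e., the m₁,…,m_{n_f} are not all equal. -/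
open MeasureTheory Real Set Finset

/-- Finiteness of the remaining β-integral in the Weibull posterior propriety proof,
when the geometric mean of the exact-observation times is strictly below their maximum. -/
theorem weibull_beta_integral_finite (n nf : ℕ) (b : ℝ) (hn : 1 ≤ n) (hnf : 1 ≤ nf)
    (hle : nf ≤ n) (hb : 0 ≤ b) (hnfb : 0 < (nf:ℝ) - b)
    (m : ℕ → ℝ) (hm : ∀ i < n, 0 < m i)
    (hgm : (∏ i ∈ Finset.range nf, m i) ^ ((1:ℝ) / nf) <
      (Finset.range nf).sup' (Finset.nonempty_range_iff.mpr (by omega)) m) :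
    MeasureTheory.IntegrableOn
      (fun β : ℝ => β ^ ((nf:ℝ) - b - 1) * (∏ i ∈ Finset.range nf, m i ^ (β - 1)) /
        (∑ i ∈ Finset.range n, m i ^ β) ^ (nf:ℕ))
      (Set.Ioi 0) := by
  have hne : (Finset.range nf).Nonempty := Finset.nonempty_range_iff.mpr (by omega)
  set M : ℝ := (Finset.range nf).sup' hne m with hM
  set G : ℝ := ∏ i ∈ Finset.range nf, m i with hGdef
  -- positivity of relevant quantities
  have hmpos : ∀ i ∈ Finset.range nf, 0 < m i := fun i hi =>
    hm i (lt_of_lt_of_le (Finset.mem_range.mp hi) hle)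
  have hGpos : 0 < G := Finset.prod_pos hmpos
  obtain ⟨i0, hi0, hMi0⟩ := Finset.exists_mem_eq_sup' hne m
  have hMeq : M = m i0 := hMi0
  have hMpos : 0 < M := hMeq ▸ hmpos i0 hi0
  -- G < M ^ nf
  have hGM : G < M ^ nf := by
    have hnf0 : (nf : ℝ) ≠ 0 := Nat.cast_ne_zero.mpr (by omega)
    have h1 : (G ^ ((1:ℝ)/nf)) ^ (nf:ℕ) < M ^ (nf:ℕ) := by
      apply pow_lt_pow_left₀ hgm (Real.rpow_nonneg hGpos.le _)
      omega
    rwa [← Real.rpow_natCast (G ^ ((1:ℝ)/nf)) nf, ← Real.rpow_mul hGpos.le,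
      one_div, inv_mul_cancel₀ hnf0, Real.rpow_one] at h1
  set h : ℝ := G / M ^ nf with hh
  have hhpos : 0 < h := div_pos hGpos (pow_pos hMpos nf)
  have hh1 : h < 1 := (div_lt_one (pow_pos hMpos nf)).mpr hGM
  set a : ℝ := -Real.log h with ha
  have hapos : 0 < a := by
    have := Real.log_neg hhpos hh1
    linarith
  set s : ℝ := (nf:ℝ) - b - 1 with hs
  have hs1 : -1 < s := by simp [hs]; linarith
  -- the dominating function
  have hg : IntegrableOn (fun β : ℝ => G⁻¹ * (β ^ s * Real.exp (-a * β))) (Set.Ioi 0) := by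
    have := (integrableOn_rpow_mul_exp_neg_mul_rpow hs1 (zero_lt_one' ℝ) hapos).const_mul G⁻¹
    simpa [IntegrableOn] using this
  refine Integrable.mono' hg ?_ ?_
  · -- measurability via continuity on Ioi 0
    have hc : ∀ c : ℝ, c ≠ 0 → Continuous fun β : ℝ => c ^ β := fun c hc =>
      continuous_iff_continuousAt.mpr fun _ => Real.continuousAt_const_rpow hc
    have h1 : ContinuousOn (fun β : ℝ => β ^ s) (Set.Ioi 0) := fun β hβ =>
      (Real.continuousAt_rpow_const β s (Or.inl (ne_of_gt hβ))).continuousWithinAt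
    have h2 : Continuous fun β : ℝ => ∏ i ∈ Finset.range nf, m i ^ (β - 1) := by
      apply continuous_finset_prod
      intro i hi
      exact (hc (m i) (hmpos i hi).ne').comp (continuous_id.sub continuous_const)
    have h3 : Continuous fun β : ℝ => (∑ i ∈ Finset.range n, m i ^ β) ^ (nf:ℕ) := by
      apply Continuous.pow
      exact continuous_finset_sum _ fun i hi => hc (m i) (hm i (Finset.mem_range.mp hi)).ne'
    apply ContinuousOn.aestronglyMeasurable _ measurableSet_Ioi
    apply ContinuousOn.div ((h1.mul h2.continuousOn))
      h3.continuousOn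
    intro β hβ
    have hDge : (M:ℝ) ^ β ≤ ∑ i ∈ Finset.range n, m i ^ β := by
      rw [hMeq]
      exact Finset.single_le_sum (f := fun i => m i ^ β)
        (fun i hi => (Real.rpow_pos_of_pos (hm i (Finset.mem_range.mp hi)) β).le)
        (Finset.mem_range.mpr (lt_of_lt_of_le (Finset.mem_range.mp hi0) hle))
    have : 0 < ∑ i ∈ Finset.range n, m i ^ β :=
      lt_of_lt_of_le (Real.rpow_pos_of_pos hMpos β) hDge
    positivity
  · -- pointwise bound a.e.
    filter_upwards [ae_restrict_mem measurableSet_Ioi] with β (hβ : 0 < β)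
    have hDge : (M:ℝ) ^ β ≤ ∑ i ∈ Finset.range n, m i ^ β := by
      rw [hMeq]
      exact Finset.single_le_sum (f := fun i => m i ^ β)
        (fun i hi => (Real.rpow_pos_of_pos (hm i (Finset.mem_range.mp hi)) β).le)
        (Finset.mem_range.mpr (lt_of_lt_of_le (Finset.mem_range.mp hi0) hle))
    have hMβpos : 0 < (M:ℝ) ^ β := Real.rpow_pos_of_pos hMpos β
    have hDpos : 0 < ∑ i ∈ Finset.range n, m i ^ β := lt_of_lt_of_le hMβpos hDge
    have hnum_nonneg : 0 ≤ β ^ s * ∏ i ∈ Finset.range nf, m i ^ (β - 1) := by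
      apply mul_nonneg (Real.rpow_nonneg hβ.le _)
      exact Finset.prod_nonneg fun i hi => (Real.rpow_nonneg (hmpos i hi).le _)
    have hfnonneg : 0 ≤ β ^ s * (∏ i ∈ Finset.range nf, m i ^ (β - 1)) /
        (∑ i ∈ Finset.range n, m i ^ β) ^ (nf:ℕ) :=
      div_nonneg hnum_nonneg (pow_nonneg hDpos.le _)
    rw [Real.norm_of_nonneg hfnonneg]
    have step1 : β ^ s * (∏ i ∈ Finset.range nf, m i ^ (β - 1)) /
        (∑ i ∈ Finset.range n, m i ^ β) ^ (nf:ℕ) ≤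
        β ^ s * (∏ i ∈ Finset.range nf, m i ^ (β - 1)) / ((M:ℝ) ^ β) ^ (nf:ℕ) := by
      gcongr
    refine le_trans step1 (le_of_eq ?_)
    -- rewrite the product
    have hprod : ∏ i ∈ Finset.range nf, m i ^ (β - 1) = G ^ β / G := by
      rw [show (∏ i ∈ Finset.range nf, m i ^ (β - 1)) =
          ∏ i ∈ Finset.range nf, (m i ^ β / m i) from
        Finset.prod_congr rfl fun i hi => by
          rw [Real.rpow_sub (hmpos i hi), Real.rpow_one],
        Finset.prod_div_distrib, Real.finset_prod_rpow _ _ (fun i hi => (hmpos i hi).le)]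
    have hden : ((M:ℝ) ^ β) ^ (nf:ℕ) = (M ^ nf) ^ β := by
      rw [← Real.rpow_natCast ((M:ℝ) ^ β) nf, ← Real.rpow_mul hMpos.le,
        mul_comm, Real.rpow_mul hMpos.le, Real.rpow_natCast]
    have hexp : h ^ β = Real.exp (-a * β) := by
      rw [Real.rpow_def_of_pos hhpos, ha]
      ring_nf
    rw [hprod, hden, ← hexp, hh, Real.div_rpow hGpos.le (pow_pos hMpos nf).le]
    field_simp
end
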